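/- The multivariate deformed Pólya masses sum to unity: let 0 < τ₂ < τ₁ be reals, let m be a nonzero integer, let n, k be naturals with k ≥ 1, and let β₁, …, β_k, β be reals such that β is not equal to any of 0, 1, …, n−1. Then Σ P_{n,β,m}(y₁,…,y_k) = 1, where the sum runs over all tuples (y₁,…,y_k) of naturals with y₁ + ⋯ + y_k ≤ n. -/

import Mathlib

/-!
After the substitution `σ = (τ₁^{-m}, τ₂^{-m})`, the numerators of the masses are the terms of a
multivariate deformed Chu–Vandermonde identity expanding `[β₁ + ⋯ + β_{k+1}]_{n,σ} = [β]_{n,σ}`,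
which is nonzero because `σ₁ ≠ σ₂` and `β ∉ {0, …, n-1}`. Splitting off `y₁` factors each term
into a bivariate term for `(β₁, β₂ + ⋯ + β_{k+1})` times a `(k-1)`-variate term for `n - y₁` and
`(β₂, …, β_{k+1})`, so the multivariate identity follows from the bivariate one by induction on `k`.
The bivariate identity is proved by induction on `n`, from the deformed Pascal rule and
`[x + y] = σ₂^y [x] + σ₁^x [y]`.
-/

open Finset

noncomputable def dnum (τ₁ τ₂ x : ℝ) : ℝ := (τ₁ ^ x - τ₂ ^ x) / (τ₁ - τ₂)

noncomputable def dfac (τ₁ τ₂ : ℝ) (r : ℕ) : ℝ :=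
  ∏ j ∈ Finset.range r, dnum τ₁ τ₂ ((j : ℝ) + 1)

noncomputable def dfall (τ₁ τ₂ x : ℝ) (r : ℕ) : ℝ :=
  ∏ i ∈ Finset.range r, dnum τ₁ τ₂ (x - (i : ℝ))

noncomputable def dbinom (τ₁ τ₂ x : ℝ) (r : ℕ) : ℝ := dfall τ₁ τ₂ x r / dfac τ₁ τ₂ r

noncomputable def dmulti (τ₁ τ₂ x : ℝ) {k : ℕ} (r : Fin k → ℕ) : ℝ :=
  dfall τ₁ τ₂ x (∑ j, r j) / ∏ j, dfac τ₁ τ₂ (r j)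

/-- The `k`-variate deformed Pólya mass with parameters `n`, `(β₁,…,β_k)`, `β`
and nonzero integer `m`, built from `σ = (τ₁^{−m}, τ₂^{−m})`: for a tuple
`(y₁,…,y_k)` with `y₁+⋯+y_k ≤ n`, writing `y_{k+1} = n − (y₁+⋯+y_k)`,
`β_{k+1} = β − (β₁+⋯+β_k)` and `x_j = y₁+⋯+y_j`, it equals
`τ₁^{−m Σ_j x_j(β_{j+1}−y_{j+1})} τ₂^{−m Σ_j (n−x_j)(β_j−y_j)}
  M_σ(n; y₁,…,y_k) (Π_{j=1}^{k+1} [β_j]_{y_j,σ}) / [β]_{n,σ}`. -/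
noncomputable def polyaMass (τ₁ τ₂ : ℝ) (m : ℤ) (n : ℕ) {k : ℕ}
    (βv : Fin k → ℝ) (β : ℝ) (y : Fin k → ℕ) : ℝ :=
  let σ₁ : ℝ := τ₁ ^ (-m)
  let σ₂ : ℝ := τ₂ ^ (-m)
  let Y : Fin (k + 1) → ℕ := Fin.snoc y (n - ∑ j, y j)
  let B : Fin (k + 1) → ℝ := Fin.snoc βv (β - ∑ j, βv j)
  let X : Fin k → ℕ := fun j => ∑ i ∈ Finset.Iic j, y i
  τ₁ ^ (-(m : ℝ) * ∑ j : Fin k, (X j : ℝ) * (B j.succ - (Y j.succ : ℝ))) *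
    τ₂ ^ (-(m : ℝ) * ∑ j : Fin k, ((n : ℝ) - (X j : ℝ)) * (βv j - (y j : ℝ))) *
    dmulti σ₁ σ₂ (n : ℝ) y *
    (∏ j : Fin (k + 1), dfall σ₁ σ₂ (B j) (Y j)) / dfall σ₁ σ₂ β n

section Deformed

variable {σ₁ σ₂ : ℝ}

lemma dnum_ne_zero (h₁ : 0 < σ₁) (h₂ : 0 < σ₂) (hne : σ₁ ≠ σ₂) {x : ℝ} (hx : x ≠ 0) :
    dnum σ₁ σ₂ x ≠ 0 :=
  div_ne_zero (sub_ne_zero.2 fun h => hne ((Real.rpow_left_inj h₁.le h₂.le hx).1 h))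
    (sub_ne_zero.2 hne)

lemma dnum_add (h₁ : 0 < σ₁) (h₂ : 0 < σ₂) (u v : ℝ) :
    dnum σ₁ σ₂ (u + v) = σ₂ ^ v * dnum σ₁ σ₂ u + σ₁ ^ u * dnum σ₁ σ₂ v := by
  unfold dnum
  rw [Real.rpow_add h₁, Real.rpow_add h₂]
  ring

@[simp]
lemma dfall_zero (x : ℝ) : dfall σ₁ σ₂ x 0 = 1 := by simp [dfall]

lemma dfall_succ (x : ℝ) (r : ℕ) :
    dfall σ₁ σ₂ x (r + 1) = dfall σ₁ σ₂ x r * dnum σ₁ σ₂ (x - r) :=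
  prod_range_succ _ r

lemma dfall_succ' (x : ℝ) (r : ℕ) :
    dfall σ₁ σ₂ x (r + 1) = dfall σ₁ σ₂ (x - 1) r * dnum σ₁ σ₂ x := by
  unfold dfall
  rw [prod_range_succ']
  push_cast
  simp_rw [sub_sub, add_comm (1 : ℝ), sub_zero]

lemma dfall_add (x : ℝ) (r t : ℕ) :
    dfall σ₁ σ₂ x (r + t) = dfall σ₁ σ₂ x r * dfall σ₁ σ₂ (x - r) t := by
  unfold dfall
  rw [prod_range_add]
  push_cast
  simp_rw [sub_sub]

lemma dfall_ne_zero (h₁ : 0 < σ₁) (h₂ : 0 < σ₂) (hne : σ₁ ≠ σ₂) {x : ℝ} {r : ℕ}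
    (hx : ∀ i : ℕ, i < r → x ≠ i) : dfall σ₁ σ₂ x r ≠ 0 :=
  prod_ne_zero_iff.2 fun i hi =>
    dnum_ne_zero h₁ h₂ hne (sub_ne_zero.2 (hx i (mem_range.1 hi)))

lemma dfall_natCast_of_lt {N r : ℕ} (h : N < r) : dfall σ₁ σ₂ N r = 0 :=
  prod_eq_zero (mem_range.2 h) (by simp [dnum])

lemma dfac_succ (r : ℕ) : dfac σ₁ σ₂ (r + 1) = dfac σ₁ σ₂ r * dnum σ₁ σ₂ (r + 1) :=
  prod_range_succ _ r

lemma dfac_ne_zero (h₁ : 0 < σ₁) (h₂ : 0 < σ₂) (hne : σ₁ ≠ σ₂) (r : ℕ) : dfac σ₁ σ₂ r ≠ 0 :=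
  prod_ne_zero_iff.2 fun _ _ => dnum_ne_zero h₁ h₂ hne (by positivity)

@[simp]
lemma dbinom_zero (x : ℝ) : dbinom σ₁ σ₂ x 0 = 1 := by simp [dbinom, dfac]

lemma dbinom_natCast_of_lt {N r : ℕ} (h : N < r) : dbinom σ₁ σ₂ N r = 0 := by
  simp [dbinom, dfall_natCast_of_lt h]

lemma dbinom_succ_succ (h₁ : 0 < σ₁) (h₂ : 0 < σ₂) (hne : σ₁ ≠ σ₂) (x : ℝ) (u : ℕ) :
    dbinom σ₁ σ₂ (x + 1) (u + 1) =
      σ₂ ^ (x - u) * dbinom σ₁ σ₂ x u + σ₁ ^ ((u : ℝ) + 1) * dbinom σ₁ σ₂ x (u + 1) := by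
  have hsplit : dnum σ₁ σ₂ (x + 1) =
      σ₂ ^ (x - u) * dnum σ₁ σ₂ (u + 1) + σ₁ ^ ((u : ℝ) + 1) * dnum σ₁ σ₂ (x - u) := by
    rw [← dnum_add h₁ h₂]
    ring_nf
  have hfac := dfac_ne_zero h₁ h₂ hne u
  have hnum := dnum_ne_zero h₁ h₂ hne (by positivity : (u : ℝ) + 1 ≠ 0)
  unfold dbinom
  rw [dfall_succ', add_sub_cancel_right, dfall_succ, dfac_succ, hsplit]
  field_simp

lemma dmulti_cons (x : ℝ) {k : ℕ} (u : ℕ) (y : Fin k → ℕ) :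
    dmulti σ₁ σ₂ x (Fin.cons u y) = dbinom σ₁ σ₂ x u * dmulti σ₁ σ₂ (x - u) y := by
  unfold dmulti dbinom
  rw [Fin.sum_cons, Fin.prod_univ_succ, dfall_add, mul_div_mul_comm]
  simp only [Fin.cons_zero, Fin.cons_succ]

end Deformed

section ChuVandermonde

variable {σ₁ σ₂ : ℝ}

noncomputable def chuVandermondeTerm (σ₁ σ₂ a b : ℝ) (N u v : ℕ) : ℝ :=
  σ₁ ^ ((u : ℝ) * (b - v)) * σ₂ ^ ((v : ℝ) * (a - u)) * dbinom σ₁ σ₂ N u *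
    dfall σ₁ σ₂ a u * dfall σ₁ σ₂ b v

lemma chuVandermondeTerm_succ_left (h₁ : 0 < σ₁) (h₂ : 0 < σ₂) (hne : σ₁ ≠ σ₂) (a b : ℝ)
    {N u v : ℕ} (huv : u + v = N) :
    chuVandermondeTerm σ₁ σ₂ a b (N + 1) (u + 1) v =
      σ₁ ^ ((u : ℝ) + 1) * chuVandermondeTerm σ₁ σ₂ a b N (u + 1) v +
        chuVandermondeTerm σ₁ σ₂ a b N u v * (σ₁ ^ (b - v) * dnum σ₁ σ₂ (a - u)) := by
  have hv : (N : ℝ) - u = v := by rw [← huv]; push_cast; ring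
  have e₁ : σ₁ ^ (((u + 1 : ℕ) : ℝ) * (b - v)) = σ₁ ^ ((u : ℝ) * (b - v)) * σ₁ ^ (b - v) := by
    rw [← Real.rpow_add h₁]; push_cast; ring_nf
  have e₂ : σ₂ ^ ((v : ℝ) * (a - ((u + 1 : ℕ) : ℝ))) * σ₂ ^ (v : ℝ) =
      σ₂ ^ ((v : ℝ) * (a - u)) := by
    rw [← Real.rpow_add h₂]; push_cast; ring_nf
  unfold chuVandermondeTerm
  rw [Nat.cast_succ N, dbinom_succ_succ h₁ h₂ hne, hv, dfall_succ a u, e₁, ← e₂]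
  push_cast
  ring

lemma chuVandermondeTerm_succ_right (h₁ : 0 < σ₁) (h₂ : 0 < σ₂) (a b : ℝ) (N u v : ℕ) :
    σ₁ ^ (u : ℝ) * chuVandermondeTerm σ₁ σ₂ a b N u (v + 1) =
      chuVandermondeTerm σ₁ σ₂ a b N u v * (σ₂ ^ (a - u) * dnum σ₁ σ₂ (b - v)) := by
  have e₁ : σ₁ ^ (u : ℝ) * σ₁ ^ ((u : ℝ) * (b - ((v + 1 : ℕ) : ℝ))) =
      σ₁ ^ ((u : ℝ) * (b - v)) := by
    rw [← Real.rpow_add h₁]; push_cast; ring_nf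
  have e₂ : σ₂ ^ (((v + 1 : ℕ) : ℝ) * (a - u)) = σ₂ ^ ((v : ℝ) * (a - u)) * σ₂ ^ (a - u) := by
    rw [← Real.rpow_add h₂]; push_cast; ring_nf
  unfold chuVandermondeTerm
  rw [dfall_succ b v, e₂, ← e₁]
  ring

theorem dfall_add_eq_sum_antidiagonal (h₁ : 0 < σ₁) (h₂ : 0 < σ₂) (hne : σ₁ ≠ σ₂)
    (a b : ℝ) (N : ℕ) :
    dfall σ₁ σ₂ (a + b) N = ∑ p ∈ antidiagonal N, chuVandermondeTerm σ₁ σ₂ a b N p.1 p.2 := by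
  induction N with
  | zero => simp [chuVandermondeTerm]
  | succ N ih =>
    set T := chuVandermondeTerm σ₁ σ₂ a b
    -- By the Pascal rule each level-`N + 1` term is a `σ₁^u`-weighted level-`N` term plus one
    -- gaining the factor `[a - u]`; the weighted terms are re-indexed to gain `[b - v]` instead.
    have hsplit : ∑ p ∈ antidiagonal (N + 1), T (N + 1) p.1 p.2 =
        ∑ p ∈ antidiagonal (N + 1), σ₁ ^ (p.1 : ℝ) * T N p.1 p.2 +
          ∑ p ∈ antidiagonal N, T N p.1 p.2 * (σ₁ ^ (b - p.2) * dnum σ₁ σ₂ (a - p.1)) := by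
      have hzero : T (N + 1) 0 (N + 1) = σ₁ ^ ((0 : ℕ) : ℝ) * T N 0 (N + 1) := by
        simp [T, chuVandermondeTerm]
      rw [Nat.sum_antidiagonal_succ, Nat.sum_antidiagonal_succ, hzero, add_assoc,
        ← sum_add_distrib]
      congr 1
      refine sum_congr rfl fun p hp => ?_
      dsimp only
      rw [Nat.cast_succ]
      exact chuVandermondeTerm_succ_left h₁ h₂ hne a b (mem_antidiagonal.1 hp)
    have hweighted : ∑ p ∈ antidiagonal (N + 1), σ₁ ^ (p.1 : ℝ) * T N p.1 p.2 =
        ∑ p ∈ antidiagonal N, T N p.1 p.2 * (σ₂ ^ (a - p.1) * dnum σ₁ σ₂ (b - p.2)) := by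
      have hlast : T N (N + 1) 0 = 0 := by
        simp [T, chuVandermondeTerm, dbinom_natCast_of_lt (Nat.lt_succ_self N)]
      rw [Nat.sum_antidiagonal_succ', hlast, mul_zero, zero_add]
      exact sum_congr rfl fun p _ => chuVandermondeTerm_succ_right h₁ h₂ a b N p.1 p.2
    rw [hsplit, hweighted, ← sum_add_distrib, dfall_succ, ih, sum_mul]
    refine sum_congr rfl fun p hp => ?_
    have hN : a + b - N = (a - p.1) + (b - p.2) := by
      rw [← mem_antidiagonal.1 hp]; push_cast; ring
    rw [hN, add_comm, dnum_add h₁ h₂]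
    ring

end ChuVandermonde

section Tuples

def tuplesSumLE (k N : ℕ) : Finset (Fin k → ℕ) :=
  (Fintype.piFinset fun _ : Fin k => range (N + 1)).filter fun y => ∑ j, y j ≤ N

@[simp]
lemma mem_tuplesSumLE {k N : ℕ} {y : Fin k → ℕ} : y ∈ tuplesSumLE k N ↔ ∑ j, y j ≤ N := by
  simp only [tuplesSumLE, mem_filter, Fintype.mem_piFinset, mem_range, and_iff_right_iff_imp]
  exact fun h i =>
    Nat.lt_succ_of_le ((single_le_sum (fun _ _ => Nat.zero_le _) (mem_univ i)).trans h)

lemma sum_tuplesSumLE_succ {M : Type*} [AddCommMonoid M] (k N : ℕ)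
    (f : (Fin (k + 1) → ℕ) → M) :
    ∑ y ∈ tuplesSumLE (k + 1) N, f y =
      ∑ p ∈ antidiagonal N, ∑ y ∈ tuplesSumLE k p.2, f (Fin.cons p.1 y) := by
  rw [sum_sigma']
  refine sum_nbij' (fun y => ⟨(y 0, N - y 0), Fin.tail y⟩) (fun p => Fin.cons p.1.1 p.2)
    ?_ ?_ ?_ ?_ ?_
  · intro y hy
    simp only [mem_sigma, mem_tuplesSumLE, HasAntidiagonal.mem_antidiagonal] at hy ⊢
    rw [Fin.sum_univ_succ] at hy
    exact ⟨by omega, by simp only [Fin.tail]; omega⟩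
  · rintro ⟨⟨u, v⟩, y⟩ hp
    simp only [mem_sigma, mem_tuplesSumLE, HasAntidiagonal.mem_antidiagonal] at hp ⊢
    rw [Fin.sum_cons]
    omega
  · intro y _
    exact Fin.cons_self_tail y
  · rintro ⟨⟨u, v⟩, y⟩ hp
    simp only [mem_sigma, HasAntidiagonal.mem_antidiagonal] at hp
    simp only [Fin.cons_zero, Fin.tail_cons, Sigma.mk.injEq, Prod.mk.injEq, heq_eq_eq, true_and,
      and_true]
    omega
  · intro y _
    rw [Fin.cons_self_tail]

lemma sum_Iic_zero_cons {M : Type*} [AddCommMonoid M] {k : ℕ} (u : M) (y : Fin k → M) :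
    ∑ i ∈ Iic (0 : Fin (k + 1)), (Fin.cons u y : Fin (k + 1) → M) i = u := by
  rw [← bot_eq_zero, Iic_bot, sum_singleton, bot_eq_zero, Fin.cons_zero]

lemma sum_Iic_succ_cons {M : Type*} [AddCommMonoid M] {k : ℕ} (u : M) (y : Fin k → M)
    (j : Fin k) :
    ∑ i ∈ Iic j.succ, (Fin.cons u y : Fin (k + 1) → M) i = u + ∑ i ∈ Iic j, y i := by
  rw [← Icc_bot, Icc_eq_cons_Ioc bot_le, sum_cons, bot_eq_zero, ← Fin.map_succEmb_Iic, sum_map]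
  simp

def completeTuple (N : ℕ) {k : ℕ} (y : Fin k → ℕ) : Fin (k + 1) → ℕ :=
  Fin.snoc y (N - ∑ j, y j)

lemma sum_completeTuple {N k : ℕ} {y : Fin k → ℕ} (hy : ∑ j, y j ≤ N) :
    ∑ j, completeTuple N y j = N := by
  rw [completeTuple, Fin.sum_snoc]
  omega

lemma completeTuple_cons {N u v k : ℕ} (huv : u + v = N) (y : Fin k → ℕ) :
    completeTuple N (Fin.cons u y) = Fin.cons u (completeTuple v y) := by
  rw [completeTuple, completeTuple, Fin.sum_cons, ← Fin.cons_snoc_eq_snoc_cons]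
  congr 2
  omega

end Tuples

section MultiVandermonde

variable {σ₁ σ₂ : ℝ}

noncomputable def vandermondeExp₁ (N : ℕ) {k : ℕ} (B : Fin (k + 1) → ℝ) (y : Fin k → ℕ) : ℝ :=
  ∑ j, ((∑ i ∈ Iic j, y i : ℕ) : ℝ) * (B j.succ - completeTuple N y j.succ)

noncomputable def vandermondeExp₂ (N : ℕ) {k : ℕ} (B : Fin (k + 1) → ℝ) (y : Fin k → ℕ) : ℝ :=
  ∑ j, ((N : ℝ) - (∑ i ∈ Iic j, y i : ℕ)) * (B j.castSucc - y j)

lemma vandermondeExp₁_cons {N u v k : ℕ} (huv : u + v = N) (B : Fin (k + 2) → ℝ)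
    {y : Fin k → ℕ} (hy : ∑ j, y j ≤ v) :
    vandermondeExp₁ N B (Fin.cons u y) =
      u * (∑ j : Fin (k + 1), B j.succ - v) + vandermondeExp₁ v (Fin.tail B) y := by
  have hv : (v : ℝ) = ∑ j, (completeTuple v y j : ℝ) := by
    exact_mod_cast (sum_completeTuple hy).symm
  unfold vandermondeExp₁
  rw [completeTuple_cons huv, Fin.sum_univ_succ, hv,
    Fin.sum_univ_succ (f := fun j : Fin (k + 1) => B j.succ),
    Fin.sum_univ_succ (f := fun j : Fin (k + 1) => (completeTuple v y j : ℝ))]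
  simp only [sum_Iic_zero_cons, sum_Iic_succ_cons, Fin.cons_succ, Fin.tail, Nat.cast_add,
    add_mul, sum_add_distrib, ← mul_sum, sum_sub_distrib]
  ring

lemma vandermondeExp₂_cons {N u v k : ℕ} (huv : u + v = N) (B : Fin (k + 2) → ℝ)
    (y : Fin k → ℕ) :
    vandermondeExp₂ N B (Fin.cons u y) =
      v * (B 0 - u) + vandermondeExp₂ v (Fin.tail B) y := by
  unfold vandermondeExp₂
  rw [Fin.sum_univ_succ, ← huv]
  simp only [sum_Iic_zero_cons, sum_Iic_succ_cons, Fin.cons_succ, Fin.cons_zero, Fin.tail,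
    Fin.succ_castSucc, Fin.castSucc_zero, Nat.cast_add]
  ring_nf

noncomputable def multiVandermondeTerm (σ₁ σ₂ : ℝ) (N : ℕ) {k : ℕ} (B : Fin (k + 1) → ℝ)
    (y : Fin k → ℕ) : ℝ :=
  σ₁ ^ vandermondeExp₁ N B y * σ₂ ^ vandermondeExp₂ N B y * dmulti σ₁ σ₂ N y *
    ∏ j, dfall σ₁ σ₂ (B j) (completeTuple N y j)

lemma multiVandermondeTerm_cons (h₁ : 0 < σ₁) (h₂ : 0 < σ₂) {N u v k : ℕ} (huv : u + v = N)
    (B : Fin (k + 2) → ℝ) {y : Fin k → ℕ} (hy : ∑ j, y j ≤ v) :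
    multiVandermondeTerm σ₁ σ₂ N B (Fin.cons u y) =
      σ₁ ^ ((u : ℝ) * (∑ j : Fin (k + 1), B j.succ - v)) * σ₂ ^ ((v : ℝ) * (B 0 - u)) *
        dbinom σ₁ σ₂ N u * dfall σ₁ σ₂ (B 0) u *
        multiVandermondeTerm σ₁ σ₂ v (Fin.tail B) y := by
  have hv : (N : ℝ) - u = v := by rw [← huv]; push_cast; ring
  unfold multiVandermondeTerm
  rw [vandermondeExp₁_cons huv B hy, vandermondeExp₂_cons huv B y, Real.rpow_add h₁,
    Real.rpow_add h₂, dmulti_cons, hv, completeTuple_cons huv, Fin.prod_univ_succ]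
  simp only [Fin.cons_zero, Fin.cons_succ, Fin.tail]
  ring

theorem dfall_sum_eq_sum_tuplesSumLE (h₁ : 0 < σ₁) (h₂ : 0 < σ₂) (hne : σ₁ ≠ σ₂) {k : ℕ}
    (N : ℕ) (B : Fin (k + 1) → ℝ) :
    dfall σ₁ σ₂ (∑ j, B j) N = ∑ y ∈ tuplesSumLE k N, multiVandermondeTerm σ₁ σ₂ N B y := by
  induction k generalizing N with
  | zero =>
    rw [sum_unique_nonempty (tuplesSumLE 0 N) _ ⟨default, by simp⟩]
    simp [multiVandermondeTerm, vandermondeExp₁, vandermondeExp₂, dmulti, dfac, completeTuple]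
    rfl
  | succ k ih =>
    calc dfall σ₁ σ₂ (∑ j, B j) N
        = ∑ p ∈ antidiagonal N,
            chuVandermondeTerm σ₁ σ₂ (B 0) (∑ j, Fin.tail B j) N p.1 p.2 := by
          rw [Fin.sum_univ_succ, dfall_add_eq_sum_antidiagonal h₁ h₂ hne]
          rfl
      _ = ∑ p ∈ antidiagonal N, ∑ y ∈ tuplesSumLE k p.2,
            multiVandermondeTerm σ₁ σ₂ N B (Fin.cons p.1 y) := by
          refine sum_congr rfl fun p hp => ?_
          rw [chuVandermondeTerm, ih, mul_sum]
          refine sum_congr rfl fun y hy => ?_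
          rw [multiVandermondeTerm_cons h₁ h₂ (mem_antidiagonal.1 hp) B (mem_tuplesSumLE.1 hy)]
          rfl
      _ = _ := (sum_tuplesSumLE_succ k N _).symm

end MultiVandermonde

lemma polyaMass_eq_multiVandermondeTerm_div {τ₁ τ₂ : ℝ} (hτ₁ : 0 < τ₁) (hτ₂ : 0 < τ₂) (m : ℤ)
    (n : ℕ) {k : ℕ} (βv : Fin k → ℝ) (β : ℝ) (y : Fin k → ℕ) :
    polyaMass τ₁ τ₂ m n βv β y =
      multiVandermondeTerm (τ₁ ^ (-m)) (τ₂ ^ (-m)) n (Fin.snoc βv (β - ∑ j, βv j)) y /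
        dfall (τ₁ ^ (-m)) (τ₂ ^ (-m)) β n := by
  have hpow {x : ℝ} (hx : 0 < x) (A : ℝ) : x ^ (-(m : ℝ) * A) = (x ^ (-m)) ^ A := by
    rw [Real.rpow_mul hx.le, ← Real.rpow_intCast, Int.cast_neg]
  unfold polyaMass multiVandermondeTerm vandermondeExp₁ vandermondeExp₂ completeTuple
  simp only [Fin.snoc_castSucc]
  rw [hpow hτ₁, hpow hτ₂]

theorem deformed_polya_sum_to_one_general
    (τ₁ τ₂ : ℝ) (hτ₂ : 0 < τ₂) (hττ : τ₂ < τ₁) (m : ℤ) (hm : m ≠ 0)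
    (n k : ℕ) (βv : Fin k → ℝ) (β : ℝ)
    (hβ : ∀ i : ℕ, i < n → β ≠ i) :
    ∑ y ∈ (Fintype.piFinset fun _ : Fin k => Finset.range (n + 1)).filter
        (fun y => ∑ j, y j ≤ n),
      polyaMass τ₁ τ₂ m n βv β y = 1 := by
  have hτ₁ : 0 < τ₁ := hτ₂.trans hττ
  have h₁ : 0 < τ₁ ^ (-m) := zpow_pos hτ₁ _
  have h₂ : 0 < τ₂ ^ (-m) := zpow_pos hτ₂ _
  have hne : τ₁ ^ (-m) ≠ τ₂ ^ (-m) := fun h =>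
    hττ.ne' ((zpow_left_inj₀ hτ₁.le hτ₂.le (neg_ne_zero.2 hm)).1 h)
  have hB : ∑ j, (Fin.snoc βv (β - ∑ j, βv j) : Fin (k + 1) → ℝ) j = β := by
    rw [Fin.sum_snoc]
    ring
  simp_rw [polyaMass_eq_multiVandermondeTerm_div hτ₁ hτ₂]
  rw [← sum_div]
  change (∑ y ∈ tuplesSumLE k n, _) / _ = 1
  rw [← dfall_sum_eq_sum_tuplesSumLE h₁ h₂ hne, hB, div_self (dfall_ne_zero h₁ h₂ hne hβ)]

/-- The multivariate deformed Pólya masses sum to unity: if `β` avoids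
`0,1,…,n−1`, then `Σ P_{n,β,m}(y₁,…,y_k) = 1`, the sum running over all
tuples `(y₁,…,y_k)` of naturals with `y₁+⋯+y_k ≤ n`. -/
theorem deformed_polya_sum_to_one
    (τ₁ τ₂ : ℝ) (hτ₂ : 0 < τ₂) (hττ : τ₂ < τ₁) (m : ℤ) (hm : m ≠ 0)
    (n k : ℕ) (hk : 1 ≤ k) (βv : Fin k → ℝ) (β : ℝ)
    (hβ : ∀ i : ℕ, i < n → β ≠ i) :
    ∑ y ∈ (Fintype.piFinset fun _ : Fin k => Finset.range (n + 1)).filter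
        (fun y => ∑ j, y j ≤ n),
      polyaMass τ₁ τ₂ m n βv β y = 1 :=
  deformed_polya_sum_to_one_general τ₁ τ₂ hτ₂ hττ m hm n k βv β hβ
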